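/- arXiv:2110.06656 — 3 statements merged into one kernel-verified Lean document; each statement's English description precedes it below -/
import Mathlib

section
/- Let k, n, G and H be as in the context. For every dominating set S of H with M(v,S) ≤ n+1 for every vertex v of H, and for every type-I gadget in any block of H, the set A = {a_1, …, a_n} of that gadget satisfies either A ⊆ S or A ∩ S = ∅. -/
namespace MCCRed

/-- Vertex set of a type-I gadget of order `n`: the heads `h₁, h₂`, the sets
`A = {a_1,…,a_n}` and `D = {d_1,…,d_n}`, and, for each `t ∈ [n]` and each of
the three D-gadgets `D_{a_t,d_t}`, `D_{a_t,h₁}`, `D_{d_t,h₂}` (indexed by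
`Fin 3` in this order), its `n+2` private common neighbors. -/
abbrev IVert (n : ℕ) : Type :=
  (Unit ⊕ Unit) ⊕ ((Fin n ⊕ Fin n) ⊕ (Fin n × Fin 3 × Fin (n + 2)))

/-- The head `h₁`. -/
def h1V (n : ℕ) : IVert n := Sum.inl (Sum.inl ())
/-- The head `h₂`. -/
def h2V (n : ℕ) : IVert n := Sum.inl (Sum.inr ())
/-- The vertex `a_t`. -/
def aIV (n : ℕ) (t : Fin n) : IVert n := Sum.inr (Sum.inl (Sum.inl t))
/-- The vertex `d_t`. -/
def dIV (n : ℕ) (t : Fin n) : IVert n := Sum.inr (Sum.inl (Sum.inr t))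
/-- The `s`-th private vertex of the `w`-th D-gadget at position `t`
(`w = 0`: `D_{a_t,d_t}`, `w = 1`: `D_{a_t,h₁}`, `w = 2`: `D_{d_t,h₂}`). -/
def padV (n : ℕ) (t : Fin n) (w : Fin 3) (s : Fin (n + 2)) : IVert n :=
  Sum.inr (Sum.inr (t, w, s))

/-- Adjacency-generating relation of the type-I gadget:  `h₁h₂`, `h₂` to every
`a_t`, `h₁` to every `d_t`, the heads of each D-gadget are adjacent
(`a_t d_t`, `a_t h₁`, `d_t h₂`), and each of the `n+2` private vertices of a
D-gadget is adjacent exactly to its two heads. -/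
def rI (n : ℕ) : IVert n → IVert n → Prop := fun x y =>
  (x = h1V n ∧ y = h2V n) ∨
  (∃ t, x = h2V n ∧ y = aIV n t) ∨
  (∃ t, x = h1V n ∧ y = dIV n t) ∨
  (∃ t, x = aIV n t ∧ y = dIV n t) ∨
  (∃ t, x = aIV n t ∧ y = h1V n) ∨
  (∃ t, x = dIV n t ∧ y = h2V n) ∨
  (∃ t s, x = padV n t 0 s ∧ (y = aIV n t ∨ y = dIV n t)) ∨
  (∃ t s, x = padV n t 1 s ∧ (y = aIV n t ∨ y = h1V n)) ∨
  (∃ t s, x = padV n t 2 s ∧ (y = dIV n t ∨ y = h2V n))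

/-- The type-I gadget of order `n` as a simple graph. -/
def gadgetI (n : ℕ) : SimpleGraph (IVert n) := SimpleGraph.fromRel (rI n)

/-- Vertex set of a block whose type-I gadgets are indexed by `ι`: the gadget
vertices together with `f`, `f'`, the `c_p` (`p ∈ [n+1]`) and the `b_q`
(`q ∈ [(n+1)(n+2)]`). -/
abbrev BVert (n : ℕ) (ι : Type) : Type :=
  (ι × IVert n) ⊕ ((Unit ⊕ Unit) ⊕ (Fin (n + 1) ⊕ Fin ((n + 1) * (n + 2))))

/-- The copy of gadget vertex `x` inside the gadget indexed by `g`. -/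
def gadV {n : ℕ} {ι : Type} (g : ι) (x : IVert n) : BVert n ι := Sum.inl (g, x)
/-- The block vertex `f`. -/
def fV (n : ℕ) (ι : Type) : BVert n ι := Sum.inr (Sum.inl (Sum.inl ()))
/-- The block vertex `f'`. -/
def f'V (n : ℕ) (ι : Type) : BVert n ι := Sum.inr (Sum.inl (Sum.inr ()))
/-- The block vertex `c_p`; `C'(B) = {c_1,…,c_{n+1}}`. -/
def cV (n : ℕ) (ι : Type) (p : Fin (n + 1)) : BVert n ι := Sum.inr (Sum.inr (Sum.inl p))
/-- The block vertex `b_q`. -/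
def bV (n : ℕ) (ι : Type) (q : Fin ((n + 1) * (n + 2))) : BVert n ι :=
  Sum.inr (Sum.inr (Sum.inr q))

/-- Adjacency-generating relation of a block: the gadget edges inside each
gadget, `f` adjacent to every `a_t` of every gadget, `f f'`, `f'` to each
`c_p`, and `c_p b_q` exactly when `(p-1)(n+2) < q ≤ p(n+2)` (zero-indexed:
`p(n+2) ≤ q < (p+1)(n+2)`). -/
def rB (n : ℕ) (ι : Type) : BVert n ι → BVert n ι → Prop := fun x y =>
  (∃ (g : ι) (a b : IVert n), x = gadV g a ∧ y = gadV g b ∧ rI n a b) ∨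
  (∃ (g : ι) (t : Fin n), x = fV n ι ∧ y = gadV g (aIV n t)) ∨
  (x = fV n ι ∧ y = f'V n ι) ∨
  (∃ p, x = f'V n ι ∧ y = cV n ι p) ∨
  (∃ p q, x = cV n ι p ∧ y = bV n ι q ∧
    p.val * (n + 2) ≤ q.val ∧ q.val < (p.val + 1) * (n + 2))

/-- Ordered pairs of colors `i < j`, indexing the edge-blocks and connectors. -/
abbrev Pairs (k : ℕ) : Type := {p : Fin k × Fin k // p.1 < p.2}

/-- The edges of `G` between color classes `P.1` and `P.2` (the vertex set of
`G` being `Fin k × Fin n`, with `u_{i,ℓ} = (i,ℓ)`): `e = (x,y)` encodes the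
edge `u_{i,x} u_{j,y}`. -/
abbrev EdgeIn {k n : ℕ} (G : SimpleGraph (Fin k × Fin n)) (P : Pairs k) : Type :=
  {e : Fin n × Fin n // G.Adj (P.1.1, e.1) (P.1.2, e.2)}

/-- Vertex set of `H`: the vertex-blocks `H_i` (with one gadget per `ℓ ∈ [n]`),
the edge-blocks `H_{i,j}` (with one gadget per edge in `E_{i,j}`), and for each
pair `i < j` the four connectors, encoded as `(side, kind)` with
`side = false/true` for superscript `i`/`j` and `kind = false/true` for
`r`/`s`. -/
abbrev VHmcc (k n : ℕ) (G : SimpleGraph (Fin k × Fin n)) : Type :=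
  (Fin k × BVert n (Fin n)) ⊕
    ((Σ P : Pairs k, BVert n (EdgeIn G P)) ⊕ (Pairs k × Bool × Bool))

variable {k n : ℕ}

/-- Vertex `x` of the vertex-block `H_i`. -/
def vbV (G : SimpleGraph (Fin k × Fin n)) (i : Fin k) (x : BVert n (Fin n)) :
    VHmcc k n G := Sum.inl (i, x)

/-- Vertex `x` of the edge-block `H_P`. -/
def ebV (G : SimpleGraph (Fin k × Fin n)) (P : Pairs k)
    (x : BVert n (EdgeIn G P)) : VHmcc k n G := Sum.inr (Sum.inl ⟨P, x⟩)

/-- The connector vertex of the pair `P` on side `side` of kind `kind`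
(`kind = false` is `r`, `kind = true` is `s`). -/
def connV (G : SimpleGraph (Fin k × Fin n)) (P : Pairs k) (side kind : Bool) :
    VHmcc k n G := Sum.inr (Sum.inr (P, side, kind))

/-- Adjacency-generating relation of `H`: block edges inside every vertex-block
and every edge-block, plus the connector edges. For a pair `P = (i,j)` with
`i < j`: in gadget `I_ℓ` of `H_i` the vertex `a_t` is adjacent to `s^i_P` iff
`t ≤ ℓ` and to `r^i_P` iff `ℓ ≤ t` (similarly for `H_j`); in gadget `I_e` of
`H_P` with `e = u_{i,x}u_{j,y}`, the vertex `a_t` is adjacent to `r^i_P` iff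
`t ≤ x`, to `s^i_P` iff `x ≤ t`, to `r^j_P` iff `t ≤ y` and to `s^j_P` iff
`y ≤ t`. -/
def rH (k n : ℕ) (G : SimpleGraph (Fin k × Fin n)) :
    VHmcc k n G → VHmcc k n G → Prop := fun x y =>
  (∃ (i : Fin k) (a b : BVert n (Fin n)),
    x = vbV G i a ∧ y = vbV G i b ∧ rB n (Fin n) a b) ∨
  (∃ (P : Pairs k) (a b : BVert n (EdgeIn G P)),
    x = ebV G P a ∧ y = ebV G P b ∧ rB n (EdgeIn G P) a b) ∨
  (∃ (P : Pairs k) (ℓ t : Fin n), x = vbV G P.1.1 (gadV ℓ (aIV n t)) ∧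
    ((t.val ≤ ℓ.val ∧ y = connV G P false true) ∨
     (ℓ.val ≤ t.val ∧ y = connV G P false false))) ∨
  (∃ (P : Pairs k) (ℓ t : Fin n), x = vbV G P.1.2 (gadV ℓ (aIV n t)) ∧
    ((t.val ≤ ℓ.val ∧ y = connV G P true true) ∨
     (ℓ.val ≤ t.val ∧ y = connV G P true false))) ∨
  (∃ (P : Pairs k) (e : EdgeIn G P) (t : Fin n),
    x = ebV G P (gadV e (aIV n t)) ∧
    (((t.val ≤ e.1.1.val ∧ y = connV G P false false) ∨
      (e.1.1.val ≤ t.val ∧ y = connV G P false true)) ∨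
     ((t.val ≤ e.1.2.val ∧ y = connV G P true false) ∨
      (e.1.2.val ≤ t.val ∧ y = connV G P true true))))

/-- The graph `H` output by the reduction from Multi-Colored Clique. -/
def Hmcc (k n : ℕ) (G : SimpleGraph (Fin k × Fin n)) :
    SimpleGraph (VHmcc k n G) := SimpleGraph.fromRel (rH k n G)

/-- `S` is a dominating set. -/
def IsDom {W : Type*} (H : SimpleGraph W) (S : Set W) : Prop :=
  ∀ v, v ∈ S ∨ ∃ u ∈ S, H.Adj v u

/-- Every vertex has membership `M(v,S) = |N[v] ∩ S|` at most `b`. -/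
def MembLE {W : Type*} (H : SimpleGraph W) (S : Set W) (b : ℕ) : Prop :=
  ∀ v, ((insert v (H.neighborSet v)) ∩ S).ncard ≤ b

/-- A path decomposition of `H` with bags `X_1, …, X_m`: every vertex is in
some bag, every edge is inside some bag, and the bags containing a given
vertex are consecutive. -/
def IsPathDecomp {W : Type*} (H : SimpleGraph W) (m : ℕ) (bags : Fin m → Set W) : Prop :=
  (∀ v, ∃ i, v ∈ bags i) ∧
  (∀ u v, H.Adj u v → ∃ i, u ∈ bags i ∧ v ∈ bags i) ∧
  (∀ (v : W) (i j l : Fin m), i ≤ j → j ≤ l → v ∈ bags i → v ∈ bags l → v ∈ bags j)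

section Aux

variable {k n : ℕ}

/-- First head of the `w`-th D-gadget at position `t`. -/
def padHd1 (n : ℕ) (t : Fin n) : Fin 3 → IVert n
  | 0 => aIV n t
  | 1 => aIV n t
  | 2 => dIV n t

/-- Second head of the `w`-th D-gadget at position `t`. -/
def padHd2 (n : ℕ) (t : Fin n) : Fin 3 → IVert n
  | 0 => dIV n t
  | 1 => h1V n
  | 2 => h2V n

lemma rI_pad_hd1 (t : Fin n) (w : Fin 3) (s : Fin (n + 2)) :
    rI n (padV n t w s) (padHd1 n t w) := by
  fin_cases w
  · exact Or.inr (Or.inr (Or.inr (Or.inr (Or.inr (Or.inr (Or.inl ⟨t, s, rfl, Or.inl rfl⟩))))))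
  · exact Or.inr (Or.inr (Or.inr (Or.inr (Or.inr (Or.inr (Or.inr (Or.inl
      ⟨t, s, rfl, Or.inl rfl⟩)))))))
  · exact Or.inr (Or.inr (Or.inr (Or.inr (Or.inr (Or.inr (Or.inr (Or.inr
      ⟨t, s, rfl, Or.inl rfl⟩)))))))

lemma rI_a_h1 (t : Fin n) : rI n (aIV n t) (h1V n) :=
  Or.inr (Or.inr (Or.inr (Or.inr (Or.inl ⟨t, rfl, rfl⟩))))

lemma rI_h1_d (t : Fin n) : rI n (h1V n) (dIV n t) :=
  Or.inr (Or.inr (Or.inl ⟨t, rfl, rfl⟩))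

lemma rI_h1_h2 : rI n (h1V n) (h2V n) := Or.inl ⟨rfl, rfl⟩

lemma rI_ne {x y : IVert n} (h : rI n x y) : x ≠ y := by
  rcases h with ⟨rfl, rfl⟩ | ⟨t, rfl, rfl⟩ | ⟨t, rfl, rfl⟩ | ⟨t, rfl, rfl⟩ | ⟨t, rfl, rfl⟩ |
    ⟨t, rfl, rfl⟩ | ⟨t, s, rfl, rfl | rfl⟩ | ⟨t, s, rfl, rfl | rfl⟩ | ⟨t, s, rfl, rfl | rfl⟩ <;>
    simp [h1V, h2V, aIV, dIV, padV]

lemma rI_pad_left {t : Fin n} {w : Fin 3} {s : Fin (n + 2)} {z : IVert n}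
    (h : rI n (padV n t w s) z) : z = padHd1 n t w ∨ z = padHd2 n t w := by
  rcases h with ⟨h1, h2⟩ | ⟨t', h1, h2⟩ | ⟨t', h1, h2⟩ | ⟨t', h1, h2⟩ | ⟨t', h1, h2⟩ |
    ⟨t', h1, h2⟩ | ⟨t', s', h1, h2⟩ | ⟨t', s', h1, h2⟩ | ⟨t', s', h1, h2⟩
  · exact absurd h1 (by simp [padV, h1V])
  · exact absurd h1 (by simp [padV, h2V])
  · exact absurd h1 (by simp [padV, h1V])
  · exact absurd h1 (by simp [padV, aIV])
  · exact absurd h1 (by simp [padV, aIV])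
  · exact absurd h1 (by simp [padV, dIV])
  · simp only [padV, Sum.inr.injEq, Prod.mk.injEq] at h1
    obtain ⟨rfl, rfl, rfl⟩ := h1
    exact h2
  · simp only [padV, Sum.inr.injEq, Prod.mk.injEq] at h1
    obtain ⟨rfl, rfl, rfl⟩ := h1
    exact h2
  · simp only [padV, Sum.inr.injEq, Prod.mk.injEq] at h1
    obtain ⟨rfl, rfl, rfl⟩ := h1
    exact h2

lemma rI_pad_right {t : Fin n} {w : Fin 3} {s : Fin (n + 2)} {z : IVert n}
    (h : rI n z (padV n t w s)) : False := by
  rcases h with ⟨h1, h2⟩ | ⟨t', h1, h2⟩ | ⟨t', h1, h2⟩ | ⟨t', h1, h2⟩ | ⟨t', h1, h2⟩ |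
    ⟨t', h1, h2⟩ | ⟨t', s', h1, h2 | h2⟩ | ⟨t', s', h1, h2 | h2⟩ | ⟨t', s', h1, h2 | h2⟩ <;>
    exact absurd h2 (by simp [padV, h1V, h2V, aIV, dIV])

lemma rB_pad_left {ι : Type} {g : ι} {t : Fin n} {w : Fin 3} {s : Fin (n + 2)}
    {y : BVert n ι} (h : rB n ι (gadV g (padV n t w s)) y) :
    y = gadV g (padHd1 n t w) ∨ y = gadV g (padHd2 n t w) := by
  rcases h with ⟨g', a, b, h1, h2, hr⟩ | ⟨g', t', h1, h2⟩ | ⟨h1, h2⟩ | ⟨p, h1, h2⟩ |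
    ⟨p, q, h1, h2, _⟩
  · simp only [gadV, Sum.inl.injEq, Prod.mk.injEq] at h1
    obtain ⟨rfl, rfl⟩ := h1
    rcases rI_pad_left hr with rfl | rfl
    · exact Or.inl h2
    · exact Or.inr h2
  · exact absurd h1 (by simp [gadV, fV])
  · exact absurd h1 (by simp [gadV, fV])
  · exact absurd h1 (by simp [gadV, f'V])
  · exact absurd h1 (by simp [gadV, cV])

lemma rB_pad_right {ι : Type} {g : ι} {t : Fin n} {w : Fin 3} {s : Fin (n + 2)}
    {y : BVert n ι} (h : rB n ι y (gadV g (padV n t w s))) : False := by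
  rcases h with ⟨g', a, b, h1, h2, hr⟩ | ⟨g', t', h1, h2⟩ | ⟨h1, h2⟩ | ⟨p, h1, h2⟩ |
    ⟨p, q, h1, h2, _⟩
  · simp only [gadV, Sum.inl.injEq, Prod.mk.injEq] at h2
    obtain ⟨rfl, rfl⟩ := h2
    exact rI_pad_right hr
  · exact absurd h2 (by simp [gadV, padV, aIV])
  · exact absurd h2 (by simp [gadV, f'V])
  · exact absurd h2 (by simp [gadV, cV])
  · exact absurd h2 (by simp [gadV, bV])

lemma rH_pad_vb {G : SimpleGraph (Fin k × Fin n)} {i : Fin k} {ℓ t : Fin n} {w : Fin 3}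
    {s : Fin (n + 2)} {y : VHmcc k n G}
    (h : rH k n G (vbV G i (gadV ℓ (padV n t w s))) y) :
    y = vbV G i (gadV ℓ (padHd1 n t w)) ∨ y = vbV G i (gadV ℓ (padHd2 n t w)) := by
  rcases h with ⟨i', a, b, h1, h2, hr⟩ | ⟨P, a, b, h1, h2, hr⟩ | ⟨P, ℓ', t', h1, h2⟩ |
    ⟨P, ℓ', t', h1, h2⟩ | ⟨P, e, t', h1, h2⟩
  · simp only [vbV, Sum.inl.injEq, Prod.mk.injEq] at h1
    obtain ⟨rfl, rfl⟩ := h1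
    rcases rB_pad_left hr with rfl | rfl
    · exact Or.inl h2
    · exact Or.inr h2
  · exact absurd h1 (by simp [vbV, ebV])
  · exact absurd h1 (by simp [vbV, gadV, padV, aIV])
  · exact absurd h1 (by simp [vbV, gadV, padV, aIV])
  · exact absurd h1 (by simp [vbV, ebV])

lemma rH_pad_vb' {G : SimpleGraph (Fin k × Fin n)} {i : Fin k} {ℓ t : Fin n} {w : Fin 3}
    {s : Fin (n + 2)} {y : VHmcc k n G}
    (h : rH k n G y (vbV G i (gadV ℓ (padV n t w s)))) : False := by
  rcases h with ⟨i', a, b, h1, h2, hr⟩ | ⟨P, a, b, h1, h2, hr⟩ | ⟨P, ℓ', t', h1, h2⟩ |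
    ⟨P, ℓ', t', h1, h2⟩ | ⟨P, e, t', h1, h2⟩
  · simp only [vbV, Sum.inl.injEq, Prod.mk.injEq] at h2
    obtain ⟨rfl, rfl⟩ := h2
    exact rB_pad_right hr
  · exact absurd h2 (by simp [vbV, ebV])
  · rcases h2 with ⟨_, h2⟩ | ⟨_, h2⟩ <;> exact absurd h2 (by simp [vbV, connV])
  · rcases h2 with ⟨_, h2⟩ | ⟨_, h2⟩ <;> exact absurd h2 (by simp [vbV, connV])
  · rcases h2 with (⟨_, h2⟩ | ⟨_, h2⟩) | (⟨_, h2⟩ | ⟨_, h2⟩) <;>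
      exact absurd h2 (by simp [vbV, connV])

lemma rH_pad_eb {G : SimpleGraph (Fin k × Fin n)} {P : Pairs k} {e : EdgeIn G P}
    {t : Fin n} {w : Fin 3} {s : Fin (n + 2)} {y : VHmcc k n G}
    (h : rH k n G (ebV G P (gadV e (padV n t w s))) y) :
    y = ebV G P (gadV e (padHd1 n t w)) ∨ y = ebV G P (gadV e (padHd2 n t w)) := by
  rcases h with ⟨i', a, b, h1, h2, hr⟩ | ⟨P', a, b, h1, h2, hr⟩ | ⟨P', ℓ', t', h1, h2⟩ |
    ⟨P', ℓ', t', h1, h2⟩ | ⟨P', e', t', h1, h2⟩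
  · exact absurd h1 (by simp [vbV, ebV])
  · simp only [ebV, Sum.inr.injEq, Sum.inl.injEq] at h1
    cases h1
    rcases rB_pad_left hr with rfl | rfl
    · exact Or.inl h2
    · exact Or.inr h2
  · exact absurd h1 (by simp [vbV, ebV])
  · exact absurd h1 (by simp [vbV, ebV])
  · simp only [ebV, Sum.inr.injEq, Sum.inl.injEq] at h1
    obtain ⟨rfl, h1⟩ := Sigma.mk.inj_iff.mp h1
    exact absurd (eq_of_heq h1) (by simp [gadV, padV, aIV])

lemma rH_pad_eb' {G : SimpleGraph (Fin k × Fin n)} {P : Pairs k} {e : EdgeIn G P}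
    {t : Fin n} {w : Fin 3} {s : Fin (n + 2)} {y : VHmcc k n G}
    (h : rH k n G y (ebV G P (gadV e (padV n t w s)))) : False := by
  rcases h with ⟨i', a, b, h1, h2, hr⟩ | ⟨P', a, b, h1, h2, hr⟩ | ⟨P', ℓ', t', h1, h2⟩ |
    ⟨P', ℓ', t', h1, h2⟩ | ⟨P', e', t', h1, h2⟩
  · exact absurd h2 (by simp [vbV, ebV])
  · simp only [ebV, Sum.inr.injEq, Sum.inl.injEq] at h2
    cases h2
    exact rB_pad_right hr
  · rcases h2 with ⟨_, h2⟩ | ⟨_, h2⟩ <;> exact absurd h2 (by simp [ebV, connV])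
  · rcases h2 with ⟨_, h2⟩ | ⟨_, h2⟩ <;> exact absurd h2 (by simp [ebV, connV])
  · rcases h2 with (⟨_, h2⟩ | ⟨_, h2⟩) | (⟨_, h2⟩ | ⟨_, h2⟩) <;>
      exact absurd h2 (by simp [ebV, connV])

lemma memb_card_bound {W : Type*} [Finite W] {H : SimpleGraph W} {S : Set W} {b : ℕ}
    (hM : MembLE H S b) (v : W) {α : Type} [Finite α] (f : α → W)
    (hf : Function.Injective f)
    (hmem : ∀ i, f i ∈ (insert v (H.neighborSet v)) ∩ S) : Nat.card α ≤ b := by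
  have h1 : (Set.range f).ncard = Nat.card α := by
    rw [← Set.image_univ, Set.ncard_image_of_injective _ hf, Set.ncard_univ]
  calc Nat.card α = (Set.range f).ncard := h1.symm
    _ ≤ ((insert v (H.neighborSet v)) ∩ S).ncard :=
        Set.ncard_le_ncard (by rintro y ⟨i, rfl⟩; exact hmem i) (Set.toFinite _)
    _ ≤ b := hM v

lemma gadget_dichotomy {W : Type*} [Finite W] {H : SimpleGraph W} {S : Set W}
    (hS : IsDom H S) (hM : MembLE H S (n + 1)) (F : IVert n → W)
    (hinj : Function.Injective F)
    (hadj : ∀ {x y : IVert n}, rI n x y → H.Adj (F x) (F y))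
    (hpad : ∀ (t : Fin n) (w : Fin 3) (s : Fin (n + 2)) (y : W),
      H.Adj (F (padV n t w s)) y → y = F (padHd1 n t w) ∨ y = F (padHd2 n t w)) :
    (∀ t, F (aIV n t) ∈ S) ∨ (∀ t, F (aIV n t) ∉ S) := by
  classical
  have cardLem : Nat.card (Unit ⊕ Unit ⊕ Fin n) = n + 2 := by
    simp [Nat.card_eq_fintype_card]; omega
  have dforce : ∀ (t : Fin n) (w : Fin 3), F (padHd1 n t w) ∈ S ∨ F (padHd2 n t w) ∈ S := by
    intro t w
    by_contra hc
    push_neg at hc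
    have hpadS : ∀ s : Fin (n + 2), F (padV n t w s) ∈ S := by
      intro s
      rcases hS (F (padV n t w s)) with h | ⟨u, hu, hadju⟩
      · exact h
      · rcases hpad t w s u hadju with rfl | rfl
        · exact absurd hu hc.1
        · exact absurd hu hc.2
    have hb := memb_card_bound hM (F (padHd1 n t w)) (fun s : Fin (n + 2) => F (padV n t w s))
      (fun s s' hss => by
        have := hinj hss
        simpa [padV] using this)
      (fun s => ⟨Set.mem_insert_iff.mpr (Or.inr (hadj (rI_pad_hd1 t w s)).symm), hpadS s⟩)
    simp only [Nat.card_eq_fintype_card, Fintype.card_fin] at hb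
    omega
  have had : ∀ t : Fin n, F (aIV n t) ∈ S ∨ F (dIV n t) ∈ S := fun t => dforce t 0
  by_cases hh1 : F (h1V n) ∈ S
  · have hh2 : F (h2V n) ∉ S := by
      intro hh2
      set c : Fin n → IVert n := fun t => if F (aIV n t) ∈ S then aIV n t else dIV n t with hc
      have hcA : ∀ t, c t = aIV n t ∨ c t = dIV n t := by
        intro t; by_cases h : F (aIV n t) ∈ S <;> simp [hc, h]
      have hcS : ∀ t, F (c t) ∈ S := by
        intro t
        by_cases h : F (aIV n t) ∈ S
        · simpa [hc, h] using h
        · have h2 := (had t).resolve_left h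
          simpa [hc, h] using h2
      have hcinj : ∀ t1 t2, c t1 = c t2 → t1 = t2 := by
        intro t1 t2 h12
        rcases hcA t1 with h1 | h1 <;> rcases hcA t2 with h2 | h2 <;>
          rw [h1, h2] at h12 <;> simpa [aIV, dIV] using h12
      have hch1 : ∀ t, c t ≠ h1V n := by
        intro t; rcases hcA t with h | h <;> rw [h] <;> simp [aIV, dIV, h1V]
      have hch2 : ∀ t, c t ≠ h2V n := by
        intro t; rcases hcA t with h | h <;> rw [h] <;> simp [aIV, dIV, h2V]
      have hadjc : ∀ t, H.Adj (F (h1V n)) (F (c t)) := by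
        intro t
        rcases hcA t with h | h <;> rw [h]
        · exact (hadj (rI_a_h1 t)).symm
        · exact hadj (rI_h1_d t)
      have g'inj : Function.Injective
          (Sum.elim (fun _ : Unit => h1V n) (Sum.elim (fun _ : Unit => h2V n) c)) := by
        rintro (⟨⟩ | ⟨⟩ | t1) (⟨⟩ | ⟨⟩ | t2) hh <;>
          simp only [Sum.elim_inl, Sum.elim_inr] at hh
        · rfl
        · exact absurd hh (by simp [h1V, h2V])
        · exact absurd hh.symm (hch1 t2)
        · exact absurd hh (by simp [h1V, h2V])
        · rfl
        · exact absurd hh.symm (hch2 t2)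
        · exact absurd hh (hch1 t1)
        · exact absurd hh (hch2 t1)
        · exact congrArg _ (congrArg _ (hcinj t1 t2 hh))
      have hb := memb_card_bound hM (F (h1V n))
        (fun z : Unit ⊕ Unit ⊕ Fin n =>
          F (Sum.elim (fun _ => h1V n) (Sum.elim (fun _ => h2V n) c) z))
        (hinj.comp g'inj)
        (by
          rintro (⟨⟩ | ⟨⟩ | t)
          · exact ⟨Set.mem_insert _ _, hh1⟩
          · exact ⟨Set.mem_insert_iff.mpr (Or.inr (hadj rI_h1_h2)), hh2⟩
          · exact ⟨Set.mem_insert_iff.mpr (Or.inr (hadjc t)), hcS t⟩)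
      rw [cardLem] at hb
      omega
    have hdS : ∀ t, F (dIV n t) ∈ S := fun t => (dforce t 2).resolve_right hh2
    right
    intro t0 ht0
    have g2inj : Function.Injective
        (Sum.elim (fun _ : Unit => h1V n) (Sum.elim (fun _ : Unit => aIV n t0) (dIV n))) := by
      rintro (⟨⟩ | ⟨⟩ | t1) (⟨⟩ | ⟨⟩ | t2) hh <;>
        simp only [Sum.elim_inl, Sum.elim_inr] at hh
      · rfl
      · exact absurd hh (by simp [h1V, aIV])
      · exact absurd hh (by simp [h1V, dIV])
      · exact absurd hh (by simp [h1V, aIV])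
      · rfl
      · exact absurd hh (by simp [aIV, dIV])
      · exact absurd hh (by simp [h1V, dIV])
      · exact absurd hh (by simp [aIV, dIV])
      · obtain rfl : t1 = t2 := by simpa [dIV] using hh
        rfl
    have hb := memb_card_bound hM (F (h1V n))
      (fun z : Unit ⊕ Unit ⊕ Fin n =>
        F (Sum.elim (fun _ => h1V n) (Sum.elim (fun _ => aIV n t0) (dIV n)) z))
      (hinj.comp g2inj)
      (by
        rintro (⟨⟩ | ⟨⟩ | t)
        · exact ⟨Set.mem_insert _ _, hh1⟩
        · exact ⟨Set.mem_insert_iff.mpr (Or.inr (hadj (rI_a_h1 t0)).symm), ht0⟩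
        · exact ⟨Set.mem_insert_iff.mpr (Or.inr (hadj (rI_h1_d t))), hdS t⟩)
    rw [cardLem] at hb
    omega
  · left
    intro t
    exact (dforce t 1).resolve_right hh1

end Aux

end MCCRed

open MCCRed in
/-- For every dominating set `S` of `H` with `M(v,S) ≤ n+1` for every vertex,
and every type-I gadget in any block of `H`, the set `A = {a_1,…,a_n}` of that
gadget satisfies `A ⊆ S` or `A ∩ S = ∅`. -/
theorem stmt_16 (k n : ℕ) (hk : 2 ≤ k) (hn : 1 ≤ n)
    (G : SimpleGraph (Fin k × Fin n)) (S : Set (VHmcc k n G))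
    (hS : IsDom (Hmcc k n G) S) (hM : MembLE (Hmcc k n G) S (n + 1)) :
    (∀ (i : Fin k) (ℓ : Fin n),
      (∀ t : Fin n, vbV G i (gadV ℓ (aIV n t)) ∈ S) ∨
      (∀ t : Fin n, vbV G i (gadV ℓ (aIV n t)) ∉ S)) ∧
    (∀ (P : Pairs k) (e : EdgeIn G P),
      (∀ t : Fin n, ebV G P (gadV e (aIV n t)) ∈ S) ∨
      (∀ t : Fin n, ebV G P (gadV e (aIV n t)) ∉ S)) := by
  have : Finite (VHmcc k n G) := by infer_instance
  constructor
  · intro i ℓ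
    refine gadget_dichotomy hS hM (fun x => vbV G i (gadV ℓ x))
      (fun x y h => by simpa [vbV, gadV] using h) ?_ ?_
    · intro x y hxy
      rw [Hmcc, SimpleGraph.fromRel_adj]
      refine ⟨fun hcon => rI_ne hxy (by simpa [vbV, gadV] using hcon), Or.inl ?_⟩
      exact Or.inl ⟨i, gadV ℓ x, gadV ℓ y, rfl, rfl, Or.inl ⟨ℓ, x, y, rfl, rfl, hxy⟩⟩
    · intro t w s y hy
      rw [Hmcc, SimpleGraph.fromRel_adj] at hy
      rcases hy.2 with h | h
      · exact rH_pad_vb h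
      · exact (rH_pad_vb' h).elim
  · intro P e
    refine gadget_dichotomy hS hM (fun x => ebV G P (gadV e x))
      (fun x y h => by simpa [ebV, gadV] using h) ?_ ?_
    · intro x y hxy
      rw [Hmcc, SimpleGraph.fromRel_adj]
      refine ⟨fun hcon => rI_ne hxy (by simpa [ebV, gadV] using hcon), Or.inl ?_⟩
      exact Or.inr (Or.inl ⟨P, gadV e x, gadV e y, rfl, rfl,
        Or.inl ⟨e, x, y, rfl, rfl, hxy⟩⟩)
    · intro t w s y hy
      rw [Hmcc, SimpleGraph.fromRel_adj] at hy
      rcases hy.2 with h | h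
      · exact rH_pad_eb h
      · exact (rH_pad_eb' h).elim
end

section
/- For every integer n ≥ 1, the gadget I of order n admits a path decomposition of width at most 4, i.e., a path decomposition in which every bag has at most 5 vertices. -/
namespace Stmt18Aux
open MCCRed

/-- segment length -/
def cc (n : ℕ) : ℕ := 3 * (n + 2)

lemma cc_pos (n : ℕ) : 0 < cc n := by simp [cc]

def Tf (n : ℕ) (i : Fin (n * cc n)) : Fin n :=
  ⟨i.val / cc n, Nat.div_lt_of_lt_mul (lt_of_lt_of_eq i.isLt (Nat.mul_comm n (cc n)))⟩

def Wf (n : ℕ) (i : Fin (n * cc n)) : Fin 3 :=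
  ⟨(i.val % cc n) / (n + 2), by
    have h : i.val % cc n < cc n := Nat.mod_lt _ (cc_pos n)
    exact Nat.div_lt_of_lt_mul
      (lt_of_lt_of_eq h (show cc n = (n + 2) * 3 by rw [cc, Nat.mul_comm]))⟩

def Sf (n : ℕ) (i : Fin (n * cc n)) : Fin (n + 2) :=
  ⟨i.val % cc n % (n + 2), Nat.mod_lt _ (by omega)⟩

def bag (n : ℕ) (i : Fin (n * cc n)) : Set (IVert n) :=
  {h1V n, h2V n, aIV n (Tf n i), dIV n (Tf n i), padV n (Tf n i) (Wf n i) (Sf n i)}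

lemma small_lt (n : ℕ) (w : Fin 3) (s : Fin (n + 2)) :
    s.val + (n + 2) * w.val < cc n := by
  have h2 : (n + 2) * w.val ≤ (n + 2) * 2 := Nat.mul_le_mul_left _ (by omega)
  have h3 : s.val < n + 2 := s.isLt
  have h5 : cc n = 3 * (n + 2) := rfl
  omega

lemma idx_lt (n : ℕ) (t : Fin n) (w : Fin 3) (s : Fin (n + 2)) :
    s.val + (n + 2) * w.val + cc n * t.val < n * cc n := by
  have h1 : cc n * (t.val + 1) ≤ cc n * n := Nat.mul_le_mul_left _ t.isLt
  have h2 := small_lt n w s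
  have h4 : cc n * (t.val + 1) = cc n * t.val + cc n := by ring
  have h6 : cc n * n = n * cc n := Nat.mul_comm _ _
  omega

def idx (n : ℕ) (t : Fin n) (w : Fin 3) (s : Fin (n + 2)) : Fin (n * cc n) :=
  ⟨s.val + (n + 2) * w.val + cc n * t.val, idx_lt n t w s⟩

lemma Tf_idx (n : ℕ) (t : Fin n) (w : Fin 3) (s : Fin (n + 2)) :
    Tf n (idx n t w s) = t := by
  apply Fin.ext
  show (s.val + (n + 2) * w.val + cc n * t.val) / cc n = t.val
  rw [Nat.add_mul_div_left _ _ (cc_pos n), Nat.div_eq_of_lt (small_lt n w s), Nat.zero_add]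

lemma mod_idx (n : ℕ) (t : Fin n) (w : Fin 3) (s : Fin (n + 2)) :
    (idx n t w s).val % cc n = s.val + (n + 2) * w.val := by
  show (s.val + (n + 2) * w.val + cc n * t.val) % cc n = _
  rw [Nat.add_mul_mod_self_left, Nat.mod_eq_of_lt (small_lt n w s)]

lemma Wf_idx (n : ℕ) (t : Fin n) (w : Fin 3) (s : Fin (n + 2)) :
    Wf n (idx n t w s) = w := by
  apply Fin.ext
  show (idx n t w s).val % cc n / (n + 2) = w.val
  rw [mod_idx, Nat.add_mul_div_left _ _ (by omega : 0 < n + 2),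
    Nat.div_eq_of_lt s.isLt, Nat.zero_add]

lemma Sf_idx (n : ℕ) (t : Fin n) (w : Fin 3) (s : Fin (n + 2)) :
    Sf n (idx n t w s) = s := by
  apply Fin.ext
  show (idx n t w s).val % cc n % (n + 2) = s.val
  rw [mod_idx, Nat.add_mul_mod_self_left, Nat.mod_eq_of_lt s.isLt]

lemma idx_inj (n : ℕ) (i j : Fin (n * cc n)) (hT : Tf n i = Tf n j)
    (hW : Wf n i = Wf n j) (hS : Sf n i = Sf n j) : i = j := by
  have hT' : i.val / cc n = j.val / cc n := congrArg Fin.val hT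
  have hW' : i.val % cc n / (n + 2) = j.val % cc n / (n + 2) := congrArg Fin.val hW
  have hS' : i.val % cc n % (n + 2) = j.val % cc n % (n + 2) := congrArg Fin.val hS
  have h2 := Nat.div_add_mod (i.val % cc n) (n + 2)
  have h4 := Nat.div_add_mod (j.val % cc n) (n + 2)
  have e2 : i.val % cc n = j.val % cc n := by rw [← h2, ← h4, hW', hS']
  have h1 := Nat.div_add_mod i.val (cc n)
  have h3 := Nat.div_add_mod j.val (cc n)
  apply Fin.ext
  rw [← h1, ← h3, hT', e2]

lemma mem_bag_h1 (n : ℕ) (i : Fin (n * cc n)) : h1V n ∈ bag n i := by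
  simp [bag]

lemma mem_bag_h2 (n : ℕ) (i : Fin (n * cc n)) : h2V n ∈ bag n i := by
  simp [bag]

lemma mem_bag_a (n : ℕ) (t : Fin n) (i : Fin (n * cc n)) :
    aIV n t ∈ bag n i ↔ Tf n i = t := by
  simp [bag, aIV, h1V, h2V, dIV, padV, eq_comm]

lemma mem_bag_d (n : ℕ) (t : Fin n) (i : Fin (n * cc n)) :
    dIV n t ∈ bag n i ↔ Tf n i = t := by
  simp [bag, aIV, h1V, h2V, dIV, padV, eq_comm]

lemma mem_bag_p (n : ℕ) (t : Fin n) (w : Fin 3) (s : Fin (n + 2)) (i : Fin (n * cc n)) :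
    padV n t w s ∈ bag n i ↔ Tf n i = t ∧ Wf n i = w ∧ Sf n i = s := by
  simp [bag, aIV, h1V, h2V, dIV, padV, eq_comm, and_assoc]

lemma mem_a_idx (n : ℕ) (t : Fin n) (w : Fin 3) (s : Fin (n + 2)) :
    aIV n t ∈ bag n (idx n t w s) := (mem_bag_a n t _).2 (Tf_idx n t w s)

lemma mem_d_idx (n : ℕ) (t : Fin n) (w : Fin 3) (s : Fin (n + 2)) :
    dIV n t ∈ bag n (idx n t w s) := (mem_bag_d n t _).2 (Tf_idx n t w s)

lemma mem_p_idx (n : ℕ) (t : Fin n) (w : Fin 3) (s : Fin (n + 2)) :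
    padV n t w s ∈ bag n (idx n t w s) :=
  (mem_bag_p n t w s _).2 ⟨Tf_idx n t w s, Wf_idx n t w s, Sf_idx n t w s⟩

lemma key (n : ℕ) (hn : 1 ≤ n) (u v : IVert n) (h : rI n u v) :
    ∃ i, u ∈ bag n i ∧ v ∈ bag n i := by
  obtain ⟨rfl, rfl⟩ | ⟨t, rfl, rfl⟩ | ⟨t, rfl, rfl⟩ | ⟨t, rfl, rfl⟩ | ⟨t, rfl, rfl⟩ |
    ⟨t, rfl, rfl⟩ | ⟨t, s, rfl, hy⟩ | ⟨t, s, rfl, hy⟩ | ⟨t, s, rfl, hy⟩ := h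
  · exact ⟨idx n ⟨0, hn⟩ 0 0, mem_bag_h1 n _, mem_bag_h2 n _⟩
  · exact ⟨idx n t 0 0, mem_bag_h2 n _, mem_a_idx n t 0 0⟩
  · exact ⟨idx n t 0 0, mem_bag_h1 n _, mem_d_idx n t 0 0⟩
  · exact ⟨idx n t 0 0, mem_a_idx n t 0 0, mem_d_idx n t 0 0⟩
  · exact ⟨idx n t 0 0, mem_a_idx n t 0 0, mem_bag_h1 n _⟩
  · exact ⟨idx n t 0 0, mem_d_idx n t 0 0, mem_bag_h2 n _⟩
  · refine ⟨idx n t 0 s, mem_p_idx n t 0 s, ?_⟩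
    rcases hy with rfl | rfl
    exacts [mem_a_idx n t 0 s, mem_d_idx n t 0 s]
  · refine ⟨idx n t 1 s, mem_p_idx n t 1 s, ?_⟩
    rcases hy with rfl | rfl
    exacts [mem_a_idx n t 1 s, mem_bag_h1 n _]
  · refine ⟨idx n t 2 s, mem_p_idx n t 2 s, ?_⟩
    rcases hy with rfl | rfl
    exacts [mem_d_idx n t 2 s, mem_bag_h2 n _]

lemma Tf_mono (n : ℕ) (t : Fin n) (i j l : Fin (n * cc n)) (hij : i ≤ j) (hjl : j ≤ l)
    (hi : Tf n i = t) (hl : Tf n l = t) : Tf n j = t := by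
  have e1 : i.val / cc n = t.val := congrArg Fin.val hi
  have e3 : l.val / cc n = t.val := congrArg Fin.val hl
  have h1 : i.val / cc n ≤ j.val / cc n := Nat.div_le_div_right hij
  have h2 : j.val / cc n ≤ l.val / cc n := Nat.div_le_div_right hjl
  exact Fin.ext (le_antisymm (e3 ▸ h2) (e1 ▸ h1))

end Stmt18Aux

open Stmt18Aux


open MCCRed in
/-- For every `n ≥ 1`, the type-I gadget of order `n` admits a path
decomposition of width at most `4`, i.e. with every bag of size at most `5`. -/
theorem stmt_18 (n : ℕ) (hn : 1 ≤ n) :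
    ∃ (m : ℕ) (bags : Fin m → Set (IVert n)),
      IsPathDecomp (gadgetI n) m bags ∧ ∀ i, (bags i).ncard ≤ 5 := by
  refine ⟨n * cc n, bag n, ⟨?_, ?_, ?_⟩, ?_⟩
  · -- every vertex in some bag
    rintro ((⟨⟩ | ⟨⟩) | ((t | t) | ⟨t, w, s⟩))
    · exact ⟨idx n ⟨0, hn⟩ 0 0, mem_bag_h1 n _⟩
    · exact ⟨idx n ⟨0, hn⟩ 0 0, mem_bag_h2 n _⟩
    · exact ⟨idx n t 0 0, mem_a_idx n t 0 0⟩
    · exact ⟨idx n t 0 0, mem_d_idx n t 0 0⟩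
    · exact ⟨idx n t w s, mem_p_idx n t w s⟩
  · -- edges
    intro u v hadj
    rw [gadgetI, SimpleGraph.fromRel_adj] at hadj
    obtain ⟨-, h | h⟩ := hadj
    · exact key n hn u v h
    · obtain ⟨i, h1, h2⟩ := key n hn v u h
      exact ⟨i, h2, h1⟩
  · -- consecutivity
    rintro ((⟨⟩ | ⟨⟩) | ((t | t) | ⟨t, w, s⟩)) i j l hij hjl hi hl
    · exact mem_bag_h1 n j
    · exact mem_bag_h2 n j
    · exact (mem_bag_a n t j).2 (Tf_mono n t i j l hij hjl
        ((mem_bag_a n t i).1 hi) ((mem_bag_a n t l).1 hl))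
    · exact (mem_bag_d n t j).2 (Tf_mono n t i j l hij hjl
        ((mem_bag_d n t i).1 hi) ((mem_bag_d n t l).1 hl))
    · obtain ⟨hT, hW, hS⟩ := (mem_bag_p n t w s i).1 hi
      obtain ⟨hT', hW', hS'⟩ := (mem_bag_p n t w s l).1 hl
      have hil : i = l := idx_inj n i l (hT.trans hT'.symm) (hW.trans hW'.symm)
        (hS.trans hS'.symm)
      have : j = i := le_antisymm (hil ▸ hjl) hij
      rw [this]; exact hi
  · -- size
    intro i
    simp only [bag]
    refine ((Set.ncard_insert_le _ _).trans ?_)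
    refine (Nat.add_le_add_right (Set.ncard_insert_le _ _) 1).trans ?_
    refine (Nat.add_le_add_right (Nat.add_le_add_right (Set.ncard_insert_le _ _) 1) 1).trans ?_
    refine (Nat.add_le_add_right (Nat.add_le_add_right (Nat.add_le_add_right
      (Set.ncard_insert_le _ _) 1) 1) 1).trans ?_
    simp [Set.ncard_singleton]
end

section
/- Let k, n, G and H be as in the context. The graph H admits a path decomposition of width at most 4·binom(k,2) + 5, i.e., a path decomposition in which every bag has at most 4·binom(k,2) + 6 vertices. -/
namespace MCCRed

/-! ### Arithmetic helpers -/

theorem seg_unique {a b len i : ℕ} (hlen : 0 < len) (h1 : a*len ≤ i) (h2 : i < a*len + len)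
    (h3 : b*len ≤ i) (h4 : i < b*len + len) : a = b := by
  rcases Nat.lt_trichotomy a b with h|h|h
  · have : (a+1)*len ≤ b*len := Nat.mul_le_mul_right _ h
    nlinarith
  · exact h
  · have : (b+1)*len ≤ a*len := Nat.mul_le_mul_right _ h
    nlinarith

theorem mul_succ_le {a b c : ℕ} (h : a < b) : a * c + c ≤ b * c := by
  have h2 : (a+1)*c ≤ b*c := Nat.mul_le_mul_right _ h
  nlinarith

/-! ### Layout constants -/

/-- Length of the index segment devoted to one pair `(gadget, t)`. -/
def Tn (n : ℕ) : ℕ := 3 * n + 6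
/-- Length of the index segment devoted to one gadget. -/
def gl (n : ℕ) : ℕ := n * Tn n
/-- Length of the gadget area of one block. -/
def GAn (n : ℕ) : ℕ := n * n * gl n
/-- Length of the index segment devoted to a whole block. -/
def Ln (n : ℕ) : ℕ := GAn n + (n+1)*(n+2)
/-- Total number of bags. -/
def mH (k n : ℕ) : ℕ := (k + k*k) * Ln n

variable {k n : ℕ}

/-! ### Interval endpoints for gadget and block vertices -/

def loI (n : ℕ) (sl : ℕ) : IVert n → ℕ
  | Sum.inl _ => sl * gl n
  | Sum.inr (Sum.inl (Sum.inl t)) => sl * gl n + t.val * Tn n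
  | Sum.inr (Sum.inl (Sum.inr t)) => sl * gl n + t.val * Tn n
  | Sum.inr (Sum.inr (t, w, s)) => sl * gl n + t.val * Tn n + (w.val * (n+2) + s.val)

def hiI (n : ℕ) (sl : ℕ) : IVert n → ℕ
  | Sum.inl _ => sl * gl n + (gl n - 1)
  | Sum.inr (Sum.inl (Sum.inl t)) => sl * gl n + t.val * Tn n + (Tn n - 1)
  | Sum.inr (Sum.inl (Sum.inr t)) => sl * gl n + t.val * Tn n + (Tn n - 1)
  | Sum.inr (Sum.inr (t, w, s)) => sl * gl n + t.val * Tn n + (w.val * (n+2) + s.val)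

def loB (n : ℕ) {ι : Type} (sl : ι → ℕ) : BVert n ι → ℕ
  | Sum.inl (g, x) => loI n (sl g) x
  | Sum.inr (Sum.inl (Sum.inl _)) => 0
  | Sum.inr (Sum.inl (Sum.inr _)) => GAn n
  | Sum.inr (Sum.inr (Sum.inl p)) => GAn n + p.val * (n+2)
  | Sum.inr (Sum.inr (Sum.inr q)) => GAn n + q.val

def hiB (n : ℕ) {ι : Type} (sl : ι → ℕ) : BVert n ι → ℕ
  | Sum.inl (g, x) => hiI n (sl g) x
  | Sum.inr (Sum.inl (Sum.inl _)) => Ln n - 1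
  | Sum.inr (Sum.inl (Sum.inr _)) => Ln n - 1
  | Sum.inr (Sum.inr (Sum.inl p)) => GAn n + p.val * (n+2) + (n+1)
  | Sum.inr (Sum.inr (Sum.inr q)) => GAn n + q.val

/-- Gadget slot of an edge gadget. -/
def slE {G : SimpleGraph (Fin k × Fin n)} {P : Pairs k} (e : EdgeIn G P) : ℕ :=
  e.1.1.val * n + e.1.2.val

/-- Block index of an edge block. -/
def blkE (k : ℕ) (P : Pairs k) : ℕ := k + (P.1.1.val * k + P.1.2.val)

def loH (G : SimpleGraph (Fin k × Fin n)) : VHmcc k n G → ℕ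
  | Sum.inl (i, x) => i.val * Ln n + loB n Fin.val x
  | Sum.inr (Sum.inl z) => blkE k z.1 * Ln n + loB n (fun e => slE e) z.2
  | Sum.inr (Sum.inr _) => 0

def hiH (G : SimpleGraph (Fin k × Fin n)) : VHmcc k n G → ℕ
  | Sum.inl (i, x) => i.val * Ln n + hiB n Fin.val x
  | Sum.inr (Sum.inl z) => blkE k z.1 * Ln n + hiB n (fun e => slE e) z.2
  | Sum.inr (Sum.inr _) => mH k n - 1

/-- The set of connector vertices. -/
def CC (G : SimpleGraph (Fin k × Fin n)) : Set (VHmcc k n G) :=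
  Set.range fun z : Pairs k × Bool × Bool => connV G z.1 z.2.1 z.2.2

/-- Type code used to bound the bag sizes. -/
def codeB {n : ℕ} {ι : Type} : BVert n ι → ℕ
  | Sum.inl (_, Sum.inl (Sum.inl _)) => 1
  | Sum.inl (_, Sum.inl (Sum.inr _)) => 2
  | Sum.inl (_, Sum.inr (Sum.inl (Sum.inl _))) => 3
  | Sum.inl (_, Sum.inr (Sum.inl (Sum.inr _))) => 4
  | Sum.inl (_, Sum.inr (Sum.inr _)) => 5
  | Sum.inr (Sum.inl (Sum.inl _)) => 0
  | Sum.inr (Sum.inl (Sum.inr _)) => 1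
  | Sum.inr (Sum.inr (Sum.inl _)) => 2
  | Sum.inr (Sum.inr (Sum.inr _)) => 3

def codeH {G : SimpleGraph (Fin k × Fin n)} : VHmcc k n G → ℕ
  | Sum.inl (_, x) => codeB x
  | Sum.inr (Sum.inl z) => codeB z.2
  | Sum.inr (Sum.inr _) => 0

/-! ### Basic bounds -/

theorem Ln_pos : 0 < Ln n := by
  have h : 0 < (n+1)*(n+2) := Nat.mul_pos (by omega) (by omega)
  have hL : Ln n = GAn n + (n+1)*(n+2) := rfl
  omega

theorem slV_lt (hn : 1 ≤ n) (g : Fin n) : (g : ℕ) < n*n := by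
  have h1 := g.isLt
  have h2 : n ≤ n*n := Nat.le_mul_of_pos_left n (by omega)
  omega

theorem slE_lt {G : SimpleGraph (Fin k × Fin n)} {P : Pairs k} (e : EdgeIn G P) :
    slE e < n*n := by
  have h1 := mul_succ_le (c := n) e.1.1.isLt
  have h2 := e.1.2.isLt
  have h3 : slE e = e.1.1.val * n + e.1.2.val := rfl
  omega

theorem blkE_lt (P : Pairs k) : blkE k P < k + k*k := by
  have h1 := mul_succ_le (c := k) P.1.1.isLt
  have h2 := P.1.2.isLt
  have h3 : blkE k P = k + (P.1.1.val * k + P.1.2.val) := rfl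
  omega

theorem loI_le_hiI (sl : ℕ) (x : IVert n) : loI n sl x ≤ hiI n sl x := by
  rcases x with (_|_) | ((t|t) | ⟨t,w,s⟩) <;> simp only [loI, hiI] <;> omega

theorem hiI_lt_GA (hn : 1 ≤ n) {sl : ℕ} (hsl : sl < n*n) (x : IVert n) :
    hiI n sl x < GAn n := by
  have hT : Tn n = 3*n+6 := rfl
  have hgln : gl n = n * Tn n := rfl
  have hGA : GAn n = n * n * gl n := rfl
  have hsg := mul_succ_le (c := gl n) hsl
  have hgl1 : Tn n ≤ gl n := by
    rw [hgln]; exact Nat.le_mul_of_pos_left _ (by omega)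
  rcases x with (_|_) | ((t|t) | ⟨t,w,s⟩)
  · simp only [hiI]; omega
  · simp only [hiI]; omega
  · have htT := mul_succ_le (c := Tn n) t.isLt
    simp only [hiI]; omega
  · have htT := mul_succ_le (c := Tn n) t.isLt
    simp only [hiI]; omega
  · have htT := mul_succ_le (c := Tn n) t.isLt
    have hw2 : w.val * (n+2) ≤ 2*(n+2) := Nat.mul_le_mul_right _ (by omega)
    have hs := s.isLt
    simp only [hiI]; omega

theorem loB_le_hiB (hn : 1 ≤ n) {ι : Type} (sl : ι → ℕ) (x : BVert n ι) :
    loB n sl x ≤ hiB n sl x := by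
  have hL : Ln n = GAn n + (n+1)*(n+2) := rfl
  have h : 0 < (n+1)*(n+2) := Nat.mul_pos (by omega) (by omega)
  rcases x with ⟨g, x⟩ | (_|_) | (p|q)
  · exact loI_le_hiI _ x
  · simp only [loB, hiB]; omega
  · simp only [loB, hiB]; omega
  · simp only [loB, hiB]; omega
  · simp only [loB, hiB]; omega

theorem hiB_lt_L (hn : 1 ≤ n) {ι : Type} (sl : ι → ℕ) (hsl : ∀ g, sl g < n*n)
    (x : BVert n ι) : hiB n sl x < Ln n := by
  have hL : Ln n = GAn n + (n+1)*(n+2) := rfl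
  have h : 0 < (n+1)*(n+2) := Nat.mul_pos (by omega) (by omega)
  rcases x with ⟨g, x⟩ | (_|_) | (p|q)
  · have := hiI_lt_GA hn (hsl g) x
    simp only [hiB]; omega
  · simp only [hiB]; omega
  · simp only [hiB]; omega
  · have hpc := mul_succ_le (c := n+2) p.isLt
    simp only [hiB]; omega
  · have := q.isLt
    simp only [hiB]; omega

theorem loH_le_hiH {G : SimpleGraph (Fin k × Fin n)} (hn : 1 ≤ n) (v : VHmcc k n G) :
    loH G v ≤ hiH G v := by
  rcases v with ⟨i, x⟩ | (⟨P, x⟩ | z)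
  · simp only [loH, hiH]
    have := loB_le_hiB hn (Fin.val (n := n)) x
    omega
  · simp only [loH, hiH]
    have := loB_le_hiB hn (fun e : EdgeIn G P => slE e) x
    omega
  · simp only [loH, hiH]; omega

theorem hiH_lt_m {G : SimpleGraph (Fin k × Fin n)} (hk : 2 ≤ k) (hn : 1 ≤ n)
    (v : VHmcc k n G) : hiH G v < mH k n := by
  have hmH : mH k n = (k + k*k) * Ln n := rfl
  have hLpos : 0 < Ln n := Ln_pos
  rcases v with ⟨i, x⟩ | (⟨P, x⟩ | z)
  · have h1 := hiB_lt_L hn (Fin.val (n := n)) (fun g => slV_lt hn g) x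
    have h2 := mul_succ_le (c := Ln n) (show i.val < k + k*k by have := i.isLt; nlinarith)
    simp only [loH, hiH]; omega
  · have h1 := hiB_lt_L hn (fun e : EdgeIn G P => slE e) (fun e => slE_lt e) x
    have h2 := mul_succ_le (c := Ln n) (blkE_lt P)
    simp only [loH, hiH]; omega
  · have h2 : 0 < mH k n := Nat.mul_pos (by omega) hLpos
    simp only [hiH]; omega

/-! ### Edge coverage -/

theorem rI_bag (hn : 1 ≤ n) (sl : ℕ) (hsl : sl < n*n) {a b : IVert n} (h : rI n a b) :
    ∃ j, loI n sl a ≤ j ∧ j ≤ hiI n sl a ∧ loI n sl b ≤ j ∧ j ≤ hiI n sl b := by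
  have hT : Tn n = 3*n+6 := rfl
  have hgln : gl n = n * Tn n := rfl
  have hgl1 : Tn n ≤ gl n := by
    rw [hgln]; exact Nat.le_mul_of_pos_left _ (by omega)
  have hw0 : ((0 : Fin 3) : ℕ) = 0 := rfl
  have hw1 : ((1 : Fin 3) : ℕ) = 1 := rfl
  have hw2 : ((2 : Fin 3) : ℕ) = 2 := rfl
  obtain ⟨rfl, rfl⟩ | ⟨t, rfl, rfl⟩ | ⟨t, rfl, rfl⟩ | ⟨t, rfl, rfl⟩ | ⟨t, rfl, rfl⟩
    | ⟨t, rfl, rfl⟩ | ⟨t, s, rfl, (rfl|rfl)⟩ | ⟨t, s, rfl, (rfl|rfl)⟩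
    | ⟨t, s, rfl, (rfl|rfl)⟩ := h
  · exact ⟨sl * gl n, by simp only [h1V, h2V, loI, hiI]; omega,
      by simp only [h1V, h2V, loI, hiI]; omega,
      by simp only [h1V, h2V, loI, hiI]; omega,
      by simp only [h1V, h2V, loI, hiI]; omega⟩
  all_goals have htT := mul_succ_le (c := Tn n) t.isLt
  all_goals try have hs := s.isLt
  · exact ⟨sl * gl n + t.val * Tn n,
      by simp only [h1V, h2V, aIV, dIV, loI, hiI]; omega,
      by simp only [h1V, h2V, aIV, dIV, loI, hiI]; omega,
      by simp only [h1V, h2V, aIV, dIV, loI, hiI]; omega,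
      by simp only [h1V, h2V, aIV, dIV, loI, hiI]; omega⟩
  · exact ⟨sl * gl n + t.val * Tn n,
      by simp only [h1V, h2V, aIV, dIV, loI, hiI]; omega,
      by simp only [h1V, h2V, aIV, dIV, loI, hiI]; omega,
      by simp only [h1V, h2V, aIV, dIV, loI, hiI]; omega,
      by simp only [h1V, h2V, aIV, dIV, loI, hiI]; omega⟩
  · exact ⟨sl * gl n + t.val * Tn n,
      by simp only [h1V, h2V, aIV, dIV, loI, hiI]; omega,
      by simp only [h1V, h2V, aIV, dIV, loI, hiI]; omega,
      by simp only [h1V, h2V, aIV, dIV, loI, hiI]; omega,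
      by simp only [h1V, h2V, aIV, dIV, loI, hiI]; omega⟩
  · exact ⟨sl * gl n + t.val * Tn n,
      by simp only [h1V, h2V, aIV, dIV, loI, hiI]; omega,
      by simp only [h1V, h2V, aIV, dIV, loI, hiI]; omega,
      by simp only [h1V, h2V, aIV, dIV, loI, hiI]; omega,
      by simp only [h1V, h2V, aIV, dIV, loI, hiI]; omega⟩
  · exact ⟨sl * gl n + t.val * Tn n,
      by simp only [h1V, h2V, aIV, dIV, loI, hiI]; omega,
      by simp only [h1V, h2V, aIV, dIV, loI, hiI]; omega,
      by simp only [h1V, h2V, aIV, dIV, loI, hiI]; omega,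
      by simp only [h1V, h2V, aIV, dIV, loI, hiI]; omega⟩
  all_goals refine ⟨loI n sl (Sum.inr (Sum.inr (t, _, s))), le_rfl, le_of_eq rfl, ?_, ?_⟩
  all_goals simp only [h1V, h2V, aIV, dIV, padV, loI, hiI, hw0, hw1, hw2]
  all_goals omega

theorem rB_bag {ι : Type} (hn : 1 ≤ n) (sl : ι → ℕ) (hsl : ∀ g, sl g < n*n)
    {x y : BVert n ι} (h : rB n ι x y) :
    ∃ j, loB n sl x ≤ j ∧ j ≤ hiB n sl x ∧ loB n sl y ≤ j ∧ j ≤ hiB n sl y ∧ j < Ln n := by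
  have hL : Ln n = GAn n + (n+1)*(n+2) := rfl
  have hpos : 0 < (n+1)*(n+2) := Nat.mul_pos (by omega) (by omega)
  obtain ⟨g, a, b, rfl, rfl, hab⟩ | ⟨g, t, rfl, rfl⟩ | ⟨rfl, rfl⟩ | ⟨p, rfl, rfl⟩
    | ⟨p, q, rfl, rfl, hq1, hq2⟩ := h
  · obtain ⟨j, h1, h2, h3, h4⟩ := rI_bag hn (sl g) (hsl g) hab
    have h5 := hiI_lt_GA hn (hsl g) a
    exact ⟨j, h1, h2, h3, h4, by omega⟩
  · refine ⟨loI n (sl g) (aIV n t), ?_, ?_, le_rfl, loI_le_hiI _ _, ?_⟩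
    · simp only [fV, loB]; omega
    · have h1 := loI_le_hiI (sl g) (aIV n t)
      have h2 := hiI_lt_GA hn (hsl g) (aIV n t)
      simp only [fV, gadV, loB, hiB]; omega
    · have h1 := loI_le_hiI (sl g) (aIV n t)
      have h2 := hiI_lt_GA hn (hsl g) (aIV n t)
      omega
  · exact ⟨GAn n, by simp only [fV, loB]; omega, by simp only [fV, hiB]; omega,
      by simp only [f'V, loB]; omega, by simp only [f'V, hiB]; omega, by omega⟩
  · have hpc := mul_succ_le (c := n+2) p.isLt
    exact ⟨GAn n + p.val * (n+2), by simp only [f'V, loB]; omega,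
      by simp only [f'V, hiB]; omega, by simp only [cV, loB]; omega,
      by simp only [cV, hiB]; omega, by omega⟩
  · have hq := q.isLt
    have hb : (p.val+1)*(n+2) = p.val*(n+2) + (n+2) := by ring
    exact ⟨GAn n + q.val, by simp only [cV, loB]; omega, by simp only [cV, hiB]; omega,
      by simp only [bV, loB]; omega, by simp only [bV, hiB]; omega, by omega⟩

theorem rH_conn {G : SimpleGraph (Fin k × Fin n)} (hk : 2 ≤ k) (hn : 1 ≤ n)
    (u : VHmcc k n G) (P : Pairs k) (sd kd : Bool) :
    ∃ i : Fin (mH k n), (loH G u ≤ i.val ∧ i.val ≤ hiH G u) ∧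
      (loH G (connV G P sd kd) ≤ i.val ∧ i.val ≤ hiH G (connV G P sd kd)) := by
  have h1 := loH_le_hiH hn u
  have h2 := hiH_lt_m hk hn u
  refine ⟨⟨loH G u, by omega⟩, ⟨le_rfl, h1⟩, ?_, ?_⟩
  · simp only [connV, loH]; omega
  · simp only [connV, hiH]; omega

theorem rH_bag {G : SimpleGraph (Fin k × Fin n)} (hk : 2 ≤ k) (hn : 1 ≤ n)
    {u v : VHmcc k n G} (h : rH k n G u v) :
    ∃ i : Fin (mH k n), (loH G u ≤ i.val ∧ i.val ≤ hiH G u) ∧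
      (loH G v ≤ i.val ∧ i.val ≤ hiH G v) := by
  have hmH : mH k n = (k + k*k) * Ln n := rfl
  obtain ⟨i, a, b, rfl, rfl, hab⟩ | ⟨P, a, b, rfl, rfl, hab⟩
    | ⟨P, ℓ, t, rfl, (⟨hle, rfl⟩|⟨hle, rfl⟩)⟩
    | ⟨P, ℓ, t, rfl, (⟨hle, rfl⟩|⟨hle, rfl⟩)⟩
    | ⟨P, e, t, rfl, ((⟨hle, rfl⟩|⟨hle, rfl⟩)|(⟨hle, rfl⟩|⟨hle, rfl⟩))⟩ := h
  · obtain ⟨j, h1, h2, h3, h4, hj⟩ := rB_bag hn Fin.val (fun g => slV_lt hn g) hab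
    have hb := mul_succ_le (c := Ln n) (show i.val < k + k*k by have := i.isLt; nlinarith)
    refine ⟨⟨i.val * Ln n + j, by omega⟩, ?_, ?_⟩ <;> simp only [vbV, loH, hiH] <;> omega
  · obtain ⟨j, h1, h2, h3, h4, hj⟩ := rB_bag hn (fun e : EdgeIn G P => slE e)
      (fun e => slE_lt e) hab
    have hb := mul_succ_le (c := Ln n) (blkE_lt P)
    refine ⟨⟨blkE k P * Ln n + j, by omega⟩, ?_, ?_⟩ <;> simp only [ebV, loH, hiH] <;> omega
  · exact rH_conn hk hn _ P _ _
  · exact rH_conn hk hn _ P _ _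
  · exact rH_conn hk hn _ P _ _
  · exact rH_conn hk hn _ P _ _
  · exact rH_conn hk hn _ P _ _
  · exact rH_conn hk hn _ P _ _
  · exact rH_conn hk hn _ P _ _
  · exact rH_conn hk hn _ P _ _

/-! ### Bag size: injectivity of the type code on a bag -/

theorem blockInj {ι : Type} (hn : 1 ≤ n) (sl : ι → ℕ) (hsl : ∀ g, sl g < n*n)
    (hinj : Function.Injective sl) {x y : BVert n ι} {j : ℕ}
    (hc : codeB x = codeB y)
    (hx1 : loB n sl x ≤ j) (hx2 : j ≤ hiB n sl x)
    (hy1 : loB n sl y ≤ j) (hy2 : j ≤ hiB n sl y) : x = y := by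
  have hT : Tn n = 3*n+6 := rfl
  have hgln : gl n = n * Tn n := rfl
  have hGA : GAn n = n * n * gl n := rfl
  have hL : Ln n = GAn n + (n+1)*(n+2) := rfl
  have hgl1 : Tn n ≤ gl n := by
    rw [hgln]; exact Nat.le_mul_of_pos_left _ (by omega)
  rcases x with ⟨g, (_|_) | ((t|t) | ⟨t,w,s⟩)⟩ | (_|_) | (p|q) <;>
    rcases y with ⟨g', (_|_) | ((t'|t') | ⟨t',w',s'⟩)⟩ | (_|_) | (p'|q') <;>
    simp only [codeB] at hc <;>
    simp only [loB, hiB, loI, hiI] at hx1 hx2 hy1 hy2 <;>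
    try omega
  -- (h1,h1)
  · have h1 := hsl g; have h2 := hsl g'
    have e : sl g = sl g' :=
      seg_unique (len := gl n) (i := j) (by omega) (by omega) (by omega) (by omega) (by omega)
    rw [hinj e]
  -- (h1,f')
  · have h2 := mul_succ_le (c := gl n) (hsl g)
    omega
  -- (h2,h2)
  · have h1 := hsl g; have h2 := hsl g'
    have e : sl g = sl g' :=
      seg_unique (len := gl n) (i := j) (by omega) (by omega) (by omega) (by omega) (by omega)
    rw [hinj e]
  -- (h2,c)
  · have h2 := mul_succ_le (c := gl n) (hsl g)
    omega
  -- (a,a)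
  · have hsg := mul_succ_le (c := gl n) (hsl g)
    have hsg' := mul_succ_le (c := gl n) (hsl g')
    have htT := mul_succ_le (c := Tn n) t.isLt
    have htT' := mul_succ_le (c := Tn n) t'.isLt
    have e : sl g = sl g' :=
      seg_unique (len := gl n) (i := j) (by omega) (by omega) (by omega) (by omega) (by omega)
    obtain rfl : g = g' := hinj e
    have e2 : t.val = t'.val :=
      seg_unique (len := Tn n) (i := j - sl g * gl n) (by omega) (by omega) (by omega)
        (by omega) (by omega)
    obtain rfl : t = t' := Fin.ext e2
    rfl
  -- (a,b)
  · have hsg := mul_succ_le (c := gl n) (hsl g)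
    have htT := mul_succ_le (c := Tn n) t.isLt
    omega
  -- (d,d)
  · have hsg := mul_succ_le (c := gl n) (hsl g)
    have hsg' := mul_succ_le (c := gl n) (hsl g')
    have htT := mul_succ_le (c := Tn n) t.isLt
    have htT' := mul_succ_le (c := Tn n) t'.isLt
    have e : sl g = sl g' :=
      seg_unique (len := gl n) (i := j) (by omega) (by omega) (by omega) (by omega) (by omega)
    obtain rfl : g = g' := hinj e
    have e2 : t.val = t'.val :=
      seg_unique (len := Tn n) (i := j - sl g * gl n) (by omega) (by omega) (by omega)
        (by omega) (by omega)
    obtain rfl : t = t' := Fin.ext e2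
    rfl
  -- (pad,pad)
  · have hsg := mul_succ_le (c := gl n) (hsl g)
    have hsg' := mul_succ_le (c := gl n) (hsl g')
    have htT := mul_succ_le (c := Tn n) t.isLt
    have htT' := mul_succ_le (c := Tn n) t'.isLt
    have hwa : w.val * (n+2) ≤ 2*(n+2) := Nat.mul_le_mul_right _ (by omega)
    have hwa' : w'.val * (n+2) ≤ 2*(n+2) := Nat.mul_le_mul_right _ (by omega)
    have hs := s.isLt
    have hs' := s'.isLt
    have e : sl g = sl g' :=
      seg_unique (len := gl n) (i := j) (by omega) (by omega) (by omega) (by omega) (by omega)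
    obtain rfl : g = g' := hinj e
    have e2 : t.val = t'.val :=
      seg_unique (len := Tn n) (i := j - sl g * gl n) (by omega) (by omega) (by omega)
        (by omega) (by omega)
    obtain rfl : t = t' := Fin.ext e2
    have e3 : w.val = w'.val :=
      seg_unique (len := n+2) (i := j - sl g * gl n - t.val * Tn n) (by omega) (by omega)
        (by omega) (by omega) (by omega)
    obtain rfl : w = w' := Fin.ext e3
    obtain rfl : s = s' := Fin.ext (by omega)
    rfl
  -- (f,f)
  · rfl
  -- (f',h1)
  · have h2 := mul_succ_le (c := gl n) (hsl g')
    omega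
  -- (f',f')
  · rfl
  -- (c,h2)
  · have h2 := mul_succ_le (c := gl n) (hsl g')
    omega
  -- (c,c)
  · have hpc := mul_succ_le (c := n+2) p.isLt
    have hpc' := mul_succ_le (c := n+2) p'.isLt
    have e : p.val = p'.val :=
      seg_unique (len := n+2) (i := j - GAn n) (by omega) (by omega) (by omega)
        (by omega) (by omega)
    obtain rfl : p = p' := Fin.ext e
    rfl
  -- (b,a)
  · have hsg := mul_succ_le (c := gl n) (hsl g')
    have htT := mul_succ_le (c := Tn n) t'.isLt
    omega
  -- (b,b)
  · obtain rfl : q = q' := Fin.ext (by omega)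
    rfl

theorem bags_injOn {G : SimpleGraph (Fin k × Fin n)} (hk : 2 ≤ k) (hn : 1 ≤ n) (i : ℕ) :
    Set.InjOn (codeH (G := G)) ({v | loH G v ≤ i ∧ i ≤ hiH G v} \ CC G) := by
  have hLpos : 0 < Ln n := Ln_pos
  intro u hu v hv hc
  obtain ⟨⟨hu1, hu2⟩, huC⟩ := hu
  obtain ⟨⟨hv1, hv2⟩, hvC⟩ := hv
  rcases u with ⟨iu, x⟩ | (⟨P, x⟩ | z)
  · rcases v with ⟨iv, y⟩ | (⟨P', y⟩ | z')
    · simp only [loH, hiH] at hu1 hu2 hv1 hv2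
      have hbx := hiB_lt_L hn (Fin.val (n := n)) (fun g => slV_lt hn g) x
      have hby := hiB_lt_L hn (Fin.val (n := n)) (fun g => slV_lt hn g) y
      have e : iu.val = iv.val :=
        seg_unique (len := Ln n) (i := i) hLpos (by omega) (by omega) (by omega) (by omega)
      obtain rfl : iu = iv := Fin.ext e
      simp only [codeH] at hc
      have hxy := blockInj hn Fin.val (fun g => slV_lt hn g) Fin.val_injective hc
        (j := i - iu.val * Ln n) (by omega) (by omega) (by omega) (by omega)
      rw [hxy]
    · simp only [loH, hiH] at hu1 hu2 hv1 hv2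
      have hbx := hiB_lt_L hn (Fin.val (n := n)) (fun g => slV_lt hn g) x
      have hby := hiB_lt_L hn (fun e : EdgeIn G P' => slE e) (fun e => slE_lt e) y
      have e : iu.val = blkE k P' :=
        seg_unique (len := Ln n) (i := i) hLpos (by omega) (by omega) (by omega) (by omega)
      have hb : blkE k P' = k + (P'.1.1.val * k + P'.1.2.val) := rfl
      have := iu.isLt
      omega
    · exact absurd (Set.mem_range.mpr ⟨z', rfl⟩) hvC
  · rcases v with ⟨iv, y⟩ | (⟨P', y⟩ | z')
    · simp only [loH, hiH] at hu1 hu2 hv1 hv2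
      have hbx := hiB_lt_L hn (fun e : EdgeIn G P => slE e) (fun e => slE_lt e) x
      have hby := hiB_lt_L hn (Fin.val (n := n)) (fun g => slV_lt hn g) y
      have e : blkE k P = iv.val :=
        seg_unique (len := Ln n) (i := i) hLpos (by omega) (by omega) (by omega) (by omega)
      have hb : blkE k P = k + (P.1.1.val * k + P.1.2.val) := rfl
      have := iv.isLt
      omega
    · simp only [loH, hiH] at hu1 hu2 hv1 hv2
      have hbx := hiB_lt_L hn (fun e : EdgeIn G P => slE e) (fun e => slE_lt e) x
      have hby := hiB_lt_L hn (fun e : EdgeIn G P' => slE e) (fun e => slE_lt e) y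
      have e : blkE k P = blkE k P' :=
        seg_unique (len := Ln n) (i := i) hLpos (by omega) (by omega) (by omega) (by omega)
      have hb : blkE k P = k + (P.1.1.val * k + P.1.2.val) := rfl
      have hb' : blkE k P' = k + (P'.1.1.val * k + P'.1.2.val) := rfl
      have h12 := P.1.2.isLt
      have h12' := P'.1.2.isLt
      have e3 : P.1.1.val = P'.1.1.val :=
        seg_unique (len := k) (i := P.1.1.val * k + P.1.2.val) (by omega) (by omega)
          (by omega) (by omega) (by omega)
      have e3' : P.1.1.val * k = P'.1.1.val * k := by rw [e3]
      have e4 : P.1.2.val = P'.1.2.val := by omega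
      obtain rfl : P = P' := Subtype.ext (Prod.ext (Fin.ext e3) (Fin.ext e4))
      simp only [codeH] at hc
      have hinj : Function.Injective (fun e : EdgeIn G P => slE e) := by
        intro a b hab
        have hab2 : a.1.1.val * n + a.1.2.val = b.1.1.val * n + b.1.2.val := hab
        have h2 := a.1.2.isLt
        have h2' := b.1.2.isLt
        have f3 : a.1.1.val = b.1.1.val :=
          seg_unique (len := n) (i := a.1.1.val * n + a.1.2.val) (by omega) (by omega)
            (by omega) (by omega) (by omega)
        have f3' : a.1.1.val * n = b.1.1.val * n := by rw [f3]
        have f4 : a.1.2.val = b.1.2.val := by omega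
        exact Subtype.ext (Prod.ext (Fin.ext f3) (Fin.ext f4))
      have hxy := blockInj hn (fun e : EdgeIn G P => slE e) (fun e => slE_lt e) hinj hc
        (j := i - blkE k P * Ln n) (by omega) (by omega) (by omega) (by omega)
      rw [hxy]
    · exact absurd (Set.mem_range.mpr ⟨z', rfl⟩) hvC
  · exact absurd (Set.mem_range.mpr ⟨z, rfl⟩) huC

/-! ### Counting -/

theorem card_pairs_le (k : ℕ) : Nat.card (Pairs k) ≤ Nat.choose k 2 := by
  classical
  have hinj : Function.Injective
      (fun P : Pairs k => (⟨P.1.2, ⟨P.1.1.val, P.2⟩⟩ : Σ i : Fin k, Fin i.val)) := by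
    intro P Q h
    have h1 : P.1.2 = Q.1.2 := congrArg Sigma.fst h
    have h2 : P.1.1.val = Q.1.1.val := by
      have := congrArg (fun z : (Σ i : Fin k, Fin i.val) => (z.2 : ℕ)) h
      simpa using this
    exact Subtype.ext (Prod.ext (Fin.ext h2) h1)
  refine le_trans (Nat.card_le_card_of_injective _ hinj) ?_
  rw [Nat.card_eq_fintype_card, Fintype.card_sigma]
  simp only [Fintype.card_fin]
  rw [Fin.sum_univ_eq_sum_range (fun i => i) k]
  have h1 := Finset.sum_range_id_mul_two k
  have h2 : Nat.choose k 2 = k*(k-1)/2 := Nat.choose_two_right k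
  omega

theorem ncard_CC_le {G : SimpleGraph (Fin k × Fin n)} :
    (CC G).ncard ≤ 4 * Nat.choose k 2 := by
  classical
  have h1 : (CC G).ncard ≤ Nat.card (Pairs k × Bool × Bool) := by
    rw [CC, ← Set.image_univ]
    refine le_trans (Set.ncard_image_le (Set.toFinite _)) ?_
    rw [Set.ncard_univ]
  have h2 := card_pairs_le k
  have hbool : Nat.card Bool = 2 := by
    rw [Nat.card_eq_fintype_card]; rfl
  have h3 : Nat.card (Pairs k × Bool × Bool) = Nat.card (Pairs k) * 2 * 2 := by
    rw [Nat.card_prod, Nat.card_prod, hbool]; ring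
  omega

theorem code_image (G : SimpleGraph (Fin k × Fin n)) (v : VHmcc k n G) :
    codeH v ∈ ({0,1,2,3,4,5} : Set ℕ) := by
  rcases v with ⟨i, ⟨g, (_|_) | ((t|t) | ⟨t,w,s⟩)⟩ | (_|_) | (p|q)⟩
    | (⟨P, ⟨g, (_|_) | ((t|t) | ⟨t,w,s⟩)⟩ | (_|_) | (p|q)⟩ | z) <;>
    simp [codeH, codeB]

theorem ncard_sixset : ({0,1,2,3,4,5} : Set ℕ).ncard ≤ 6 := by
  have h1 := Set.ncard_insert_le (0:ℕ) {1,2,3,4,5}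
  have h2 := Set.ncard_insert_le (1:ℕ) {2,3,4,5}
  have h3 := Set.ncard_insert_le (2:ℕ) {3,4,5}
  have h4 := Set.ncard_insert_le (3:ℕ) {4,5}
  have h5 := Set.ncard_insert_le (4:ℕ) {5}
  have h6 := Set.ncard_singleton (5:ℕ)
  omega

end MCCRed

open MCCRed in
/-- The graph `H` admits a path decomposition of width at most
`4·C(k,2) + 5`, i.e. with every bag of size at most `4·C(k,2) + 6`. -/
theorem stmt_19 (k n : ℕ) (hk : 2 ≤ k) (hn : 1 ≤ n)
    (G : SimpleGraph (Fin k × Fin n)) :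
    ∃ (m : ℕ) (bags : Fin m → Set (VHmcc k n G)),
      IsPathDecomp (Hmcc k n G) m bags ∧
      ∀ i, (bags i).ncard ≤ 4 * Nat.choose k 2 + 6 := by
  classical
  refine ⟨mH k n, fun i => {v | loH G v ≤ i.val ∧ i.val ≤ hiH G v}, ⟨?_, ?_, ?_⟩, ?_⟩
  · intro v
    exact ⟨⟨loH G v, lt_of_le_of_lt (loH_le_hiH hn v) (hiH_lt_m hk hn v)⟩, le_rfl,
      loH_le_hiH hn v⟩
  · intro u v huv
    rw [Hmcc, SimpleGraph.fromRel_adj] at huv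
    obtain ⟨-, h | h⟩ := huv
    · obtain ⟨i, h1, h2⟩ := rH_bag hk hn h
      exact ⟨i, h1, h2⟩
    · obtain ⟨i, h1, h2⟩ := rH_bag hk hn h
      exact ⟨i, h2, h1⟩
  · intro v i j l hij hjl hi hl
    have h1 : (i : ℕ) ≤ j := hij
    have h2 : (j : ℕ) ≤ l := hjl
    exact ⟨le_trans hi.1 h1, le_trans h2 hl.2⟩
  · intro i
    have hsub : {v | loH G v ≤ i.val ∧ i.val ≤ hiH G v} ⊆
        CC G ∪ ({v | loH G v ≤ i.val ∧ i.val ≤ hiH G v} \ CC G) := by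
      intro v hv
      by_cases h : v ∈ CC G
      · exact Or.inl h
      · exact Or.inr ⟨hv, h⟩
    refine le_trans (Set.ncard_le_ncard hsub (Set.toFinite _))
      (le_trans (Set.ncard_union_le _ _) ?_)
    have hC : (CC G).ncard ≤ 4 * Nat.choose k 2 := ncard_CC_le
    have hR : ({v | loH G v ≤ i.val ∧ i.val ≤ hiH G v} \ CC G).ncard ≤ 6 := by
      have hinj := bags_injOn (G := G) hk hn i.val
      have himg : codeH '' ({v | loH G v ≤ i.val ∧ i.val ≤ hiH G v} \ CC G) ⊆
          ({0,1,2,3,4,5} : Set ℕ) := by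
        rintro _ ⟨v, -, rfl⟩
        exact code_image G v
      calc ({v | loH G v ≤ i.val ∧ i.val ≤ hiH G v} \ CC G).ncard
          = (codeH '' ({v | loH G v ≤ i.val ∧ i.val ≤ hiH G v} \ CC G)).ncard :=
            (Set.ncard_image_of_injOn hinj).symm
        _ ≤ ({0,1,2,3,4,5} : Set ℕ).ncard := Set.ncard_le_ncard himg (Set.toFinite _)
        _ ≤ 6 := ncard_sixset
    omega
end
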